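/- Let H be a symmetric d×d matrix and Σ a symmetric positive definite d×d matrix. If u ~ N(0, I_d), then (1/2)·E[(uᵀ Σ^{1/2} H Σ^{1/2} u)·(Σ^{-1/2} u uᵀ Σ^{-1/2} − Σ^{-1})] = H. -/

import Mathlib

open MeasureTheory ProbabilityTheory Matrix RealInnerProductSpace Filter

open Real
open scoped ENNReal NNReal

lemma gaussianReal_std_eq : gaussianReal 0 1 =
    (volume : Measure ℝ).withDensity (fun x => ((gaussianPDFReal 0 1 x).toNNReal : ℝ≥0∞)) :=
  gaussianReal_of_var_ne_zero 0 one_ne_zero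

lemma pdf_std (x : ℝ) : gaussianPDFReal 0 1 x = (√(2 * π))⁻¹ * rexp (-(1/2) * x ^ 2) := by
  simp only [gaussianPDFReal, NNReal.coe_one, mul_one, sub_zero]
  rw [show -x^2/2 = -(1/2)*x^2 from by ring]

lemma integral_gaussianReal_std (g : ℝ → ℝ) :
    ∫ x, g x ∂(gaussianReal 0 1) = ∫ x, gaussianPDFReal 0 1 x * g x := by
  rw [gaussianReal_std_eq,
    integral_withDensity_eq_integral_smul ((measurable_gaussianPDFReal 0 1).real_toNNReal) g]
  refine integral_congr_ae (Filter.Eventually.of_forall fun x => ?_)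
  simp [NNReal.smul_def, Real.coe_toNNReal _ (gaussianPDFReal_nonneg 0 1 x)]

lemma integrable_pow_exp (n : ℕ) :
    Integrable (fun x : ℝ => x ^ n * rexp (-(1/2) * x ^ 2)) := by
  have := integrable_rpow_mul_exp_neg_mul_sq (by norm_num : (0:ℝ) < 1/2)
    (s := (n:ℝ)) (lt_of_lt_of_le neg_one_lt_zero (Nat.cast_nonneg n))
  simpa [Real.rpow_natCast] using this

lemma integrable_pow_gaussian (n : ℕ) :
    Integrable (fun x : ℝ => x ^ n) (gaussianReal 0 1) := by
  rw [gaussianReal_std_eq,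
    integrable_withDensity_iff_integrable_smul ((measurable_gaussianPDFReal 0 1).real_toNNReal)]
  refine (((integrable_pow_exp n).const_mul ((√(2 * π))⁻¹)).congr ?_)
  refine Filter.Eventually.of_forall fun x => ?_
  simp only [NNReal.smul_def, smul_eq_mul]
  rw [Real.coe_toNNReal _ (gaussianPDFReal_nonneg 0 1 x), pdf_std]
  ring

lemma integral_odd_eq_zero (f : ℝ → ℝ) (h : ∀ x, f (-x) = -f x) : ∫ x, f x = 0 := by
  have A : MeasurableEmbedding (fun x : ℝ => -x) :=
    (Homeomorph.neg ℝ).isClosedEmbedding.measurableEmbedding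
  have B : MeasurePreserving (fun x : ℝ => -x) volume volume := Measure.measurePreserving_neg _
  have h2 := B.integral_comp A f
  simp_rw [h, integral_neg] at h2
  linarith

lemma gauss_int_even (q : ℕ) (hq : Even q) :
    ∫ x : ℝ, x ^ q * rexp (-(1/2) * x ^ 2)
      = 2 * ((1/2:ℝ) ^ (-((q:ℝ)+1)/2) * (1/2) * Gamma (((q:ℝ)+1)/2)) := by
  have h2 := integral_rpow_mul_exp_neg_mul_rpow (p := 2) (q := (q:ℝ)) (b := 1/2)
    two_pos (lt_of_lt_of_le neg_one_lt_zero (Nat.cast_nonneg q)) (by norm_num)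
  have h3 : ∫ x in Set.Ioi (0:ℝ), x ^ q * rexp (-(1/2) * x ^ 2)
      = (1/2:ℝ) ^ (-((q:ℝ)+1)/2) * (1/2) * Gamma (((q:ℝ)+1)/2) := by
    rw [← h2]
    refine setIntegral_congr_fun measurableSet_Ioi fun x _ => ?_
    rw [Real.rpow_natCast, Real.rpow_two]
  rw [← h3, ← integral_comp_abs (f := fun x => x ^ q * rexp (-(1/2) * x ^ 2))]
  congr 1; ext x
  rw [hq.pow_abs, sq_abs]

lemma gM0 : ∫ x, x ^ 0 ∂(gaussianReal 0 1) = 1 := by simp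

lemma gM1 : ∫ x, x ^ 1 ∂(gaussianReal 0 1) = 0 := by
  rw [integral_gaussianReal_std]
  refine integral_odd_eq_zero _ fun x => ?_
  rw [pdf_std, pdf_std, neg_sq]; ring

lemma half_rpow (a : ℝ) : (1/2:ℝ) ^ (-a) = (2:ℝ) ^ a := by
  rw [one_div, Real.inv_rpow (by norm_num : (0:ℝ) ≤ 2),
    Real.rpow_neg (by norm_num : (0:ℝ) ≤ 2), inv_inv]

lemma Gamma_three_halves : Gamma (3/2) = √π / 2 := by
  rw [show (3/2:ℝ) = 1/2 + 1 by norm_num, Real.Gamma_add_one (by norm_num),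
    Real.Gamma_one_half_eq]; ring

lemma Gamma_five_halves : Gamma (5/2) = 3 * √π / 4 := by
  rw [show (5/2:ℝ) = 3/2 + 1 by norm_num, Real.Gamma_add_one (by norm_num),
    Gamma_three_halves]; ring

lemma two_rpow_three_halves : (2:ℝ) ^ ((3:ℝ)/2) = 2 * √2 := by
  rw [show (3:ℝ)/2 = 1 + 1/2 by norm_num, Real.rpow_add two_pos, Real.rpow_one,
    ← Real.sqrt_eq_rpow]

lemma two_rpow_five_halves : (2:ℝ) ^ ((5:ℝ)/2) = 4 * √2 := by
  rw [show (5:ℝ)/2 = 2 + 1/2 by norm_num, Real.rpow_add two_pos, ← Real.sqrt_eq_rpow,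
    show (2:ℝ) = ((2:ℕ):ℝ) by norm_num, Real.rpow_natCast]
  norm_num

lemma gM2 : ∫ x, x ^ 2 ∂(gaussianReal 0 1) = 1 := by
  rw [integral_gaussianReal_std]
  have h1 : ∫ x : ℝ, gaussianPDFReal 0 1 x * x ^ 2
      = (√(2 * π))⁻¹ * ∫ x : ℝ, x ^ 2 * rexp (-(1/2) * x ^ 2) := by
    rw [← integral_const_mul]
    congr 1; ext x; rw [pdf_std]; ring
  rw [h1, gauss_int_even 2 ⟨1, by norm_num⟩]
  have e1 : (((2:ℕ):ℝ)+1)/2 = (3:ℝ)/2 := by norm_num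
  rw [show -(((2:ℕ):ℝ)+1)/2 = -((3:ℝ)/2) by norm_num, e1, half_rpow, two_rpow_three_halves, Gamma_three_halves,
    Real.sqrt_mul (by norm_num : (0:ℝ) ≤ 2)]
  have h2 : (2:ℝ) * (2 * √2 * (1/2) * (√π/2)) = √2 * √π := by ring
  rw [h2, inv_mul_cancel₀]
  positivity

lemma gM4 : ∫ x, x ^ 4 ∂(gaussianReal 0 1) = 3 := by
  rw [integral_gaussianReal_std]
  have h1 : ∫ x : ℝ, gaussianPDFReal 0 1 x * x ^ 4
      = (√(2 * π))⁻¹ * ∫ x : ℝ, x ^ 4 * rexp (-(1/2) * x ^ 2) := by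
    rw [← integral_const_mul]
    congr 1; ext x; rw [pdf_std]; ring
  rw [h1, gauss_int_even 4 ⟨2, by norm_num⟩]
  have e1 : (((4:ℕ):ℝ)+1)/2 = (5:ℝ)/2 := by norm_num
  rw [show -(((4:ℕ):ℝ)+1)/2 = -((5:ℝ)/2) by norm_num, e1, half_rpow, two_rpow_five_halves, Gamma_five_halves,
    Real.sqrt_mul (by norm_num : (0:ℝ) ≤ 2)]
  have h2 : (2:ℝ) * (4 * √2 * (1/2) * (3 * √π/4)) = 3 * (√2 * √π) := by ring
  rw [h2, mul_comm ((√2 * √π)⁻¹), mul_assoc, mul_inv_cancel₀, mul_one]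
  positivity

noncomputable def stdGaussianPi (d : ℕ) : Measure (Fin d → ℝ) :=
  Measure.pi fun _ => gaussianReal 0 1

instance (d : ℕ) : IsProbabilityMeasure (stdGaussianPi d) := by
  unfold stdGaussianPi; infer_instance

lemma integral_stdGaussianPi_prod {d : ℕ} (f : Fin d → ℝ → ℝ) :
    ∫ u, ∏ i, f i (u i) ∂(stdGaussianPi d) = ∏ i, ∫ x, f i x ∂(gaussianReal 0 1) := by
  letI : MeasureSpace ℝ := ⟨gaussianReal 0 1⟩
  haveI : SigmaFinite (volume : Measure ℝ) := by
    show SigmaFinite (gaussianReal 0 1); infer_instance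
  have h : stdGaussianPi d = (volume : Measure (Fin d → ℝ)) := by
    rw [volume_pi]; rfl
  rw [h]
  exact integral_fintype_prod_volume_eq_prod f

lemma integrable_stdGaussianPi_prod {d : ℕ} (f : Fin d → ℝ → ℝ)
    (hf : ∀ i, Integrable (f i) (gaussianReal 0 1)) :
    Integrable (fun u : Fin d → ℝ => ∏ i, f i (u i)) (stdGaussianPi d) := by
  letI : MeasureSpace ℝ := ⟨gaussianReal 0 1⟩
  haveI : SigmaFinite (volume : Measure ℝ) := by
    show SigmaFinite (gaussianReal 0 1); infer_instance
  have h : stdGaussianPi d = (volume : Measure (Fin d → ℝ)) := by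
    rw [volume_pi]; rfl
  rw [h]
  exact Integrable.fintype_prod hf

lemma hrw2 {d : ℕ} (k l : Fin d) (u : Fin d → ℝ) :
    u k * u l = ∏ i, (u i) ^ ((if k = i then 1 else 0) + (if l = i then 1 else 0)) := by
  simp only [pow_add, pow_ite, pow_one, pow_zero, Finset.prod_mul_distrib]
  simp [Finset.prod_ite_eq]

lemma hrw4 {d : ℕ} (k l m n : Fin d) (u : Fin d → ℝ) :
    u k * u l * (u m * u n) = ∏ i, (u i) ^ ((if k = i then 1 else 0) + (if l = i then 1 else 0)
      + (if m = i then 1 else 0) + (if n = i then 1 else 0)) := by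
  simp only [pow_add, pow_ite, pow_one, pow_zero, Finset.prod_mul_distrib]
  simp [Finset.prod_ite_eq]
  ring

lemma integrable_mono2 {d : ℕ} (k l : Fin d) :
    Integrable (fun u : Fin d → ℝ => u k * u l) (stdGaussianPi d) := by
  have := integrable_stdGaussianPi_prod
    (fun i x => x ^ ((if k = i then 1 else 0) + (if l = i then 1 else 0)))
    (fun i => integrable_pow_gaussian _)
  exact this.congr (Filter.Eventually.of_forall fun u => (hrw2 k l u).symm)

lemma integrable_mono4 {d : ℕ} (k l m n : Fin d) :
    Integrable (fun u : Fin d → ℝ => u k * u l * (u m * u n)) (stdGaussianPi d) := by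
  have := integrable_stdGaussianPi_prod
    (fun i x => x ^ ((if k = i then 1 else 0) + (if l = i then 1 else 0)
      + (if m = i then 1 else 0) + (if n = i then 1 else 0)))
    (fun i => integrable_pow_gaussian _)
  exact this.congr (Filter.Eventually.of_forall fun u => (hrw4 k l m n u).symm)

lemma moment2 {d : ℕ} (k l : Fin d) :
    ∫ u, u k * u l ∂(stdGaussianPi d) = if k = l then 1 else 0 := by
  simp_rw [hrw2 k l]
  rw [integral_stdGaussianPi_prod
    (fun i x => x ^ ((if k = i then 1 else 0) + (if l = i then 1 else 0)))]
  rcases eq_or_ne k l with rfl | h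
  · rw [if_pos rfl]
    refine Finset.prod_eq_one fun i _ => ?_
    rcases eq_or_ne k i with rfl | h2
    · simpa using gM2
    · simp only [if_neg h2]
      simpa using gM0
  · rw [if_neg h]
    refine Finset.prod_eq_zero (Finset.mem_univ k) ?_
    rw [if_pos rfl, if_neg (fun hlk => h hlk.symm)]
    simpa using gM1

lemma gME0 {E : ℕ} (h : E = 0) : ∫ x, x ^ E ∂(gaussianReal 0 1) = 1 := by
  subst h; simpa using gM0

lemma gME1 {E : ℕ} (h : E = 1) : ∫ x, x ^ E ∂(gaussianReal 0 1) = 0 := by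
  subst h; exact gM1

lemma gME2 {E : ℕ} (h : E = 2) : ∫ x, x ^ E ∂(gaussianReal 0 1) = 1 := by
  subst h; exact gM2

lemma gME4 {E : ℕ} (h : E = 4) : ∫ x, x ^ E ∂(gaussianReal 0 1) = 3 := by
  subst h; exact gM4

lemma moment4 {d : ℕ} (k l m n : Fin d) :
    ∫ u, u k * u l * (u m * u n) ∂(stdGaussianPi d)
      = (if k = l then 1 else 0) * (if m = n then 1 else 0)
      + (if k = m then 1 else 0) * (if l = n then 1 else 0)
      + (if k = n then 1 else 0) * (if l = m then 1 else 0) := by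
  simp_rw [hrw4 k l m n]
  rw [integral_stdGaussianPi_prod (fun i x => x ^ ((if k = i then 1 else 0)
    + (if l = i then 1 else 0) + (if m = i then 1 else 0) + (if n = i then 1 else 0)))]
  rcases eq_or_ne k l with rfl | hkl
  · rcases eq_or_ne m n with rfl | hmn
    · rcases eq_or_ne k m with rfl | hkm
      · -- all four equal : value 3
        rw [Finset.prod_eq_single k (fun i _ hik => gME0 (by simp_all [eq_comm]))
          (fun h => absurd (Finset.mem_univ k) h), gME4 (by simp_all [eq_comm])]
        norm_num
      · -- two pairs k=l, m=n, k≠m : value 1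
        rw [Finset.prod_eq_one (fun i _ => by
          rcases eq_or_ne k i with rfl | h2
          · exact gME2 (by simp_all [eq_comm])
          · rcases eq_or_ne m i with rfl | h3
            · exact gME2 (by simp_all [eq_comm])
            · exact gME0 (by simp_all [eq_comm]))]
        simp_all [eq_comm]
    · -- k = l, m ≠ n : value 0
      rcases eq_or_ne k m with rfl | hkm
      · rw [Finset.prod_eq_zero (Finset.mem_univ n) (gME1 (by simp_all [eq_comm]))]
        simp_all [eq_comm]
      · rcases eq_or_ne k n with rfl | hkn
        · rw [Finset.prod_eq_zero (Finset.mem_univ m) (gME1 (by simp_all [eq_comm]))]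
          simp_all [eq_comm]
        · rw [Finset.prod_eq_zero (Finset.mem_univ m) (gME1 (by simp_all [eq_comm]))]
          simp_all [eq_comm]
  · rcases eq_or_ne m n with rfl | hmn
    · -- k ≠ l, m = n : value 0
      rcases eq_or_ne k m with rfl | hkm
      · rw [Finset.prod_eq_zero (Finset.mem_univ l) (gME1 (by simp_all [eq_comm]))]
        simp_all [eq_comm]
      · rcases eq_or_ne l m with rfl | hlm
        · rw [Finset.prod_eq_zero (Finset.mem_univ k) (gME1 (by simp_all [eq_comm]))]
          simp_all [eq_comm]
        · rw [Finset.prod_eq_zero (Finset.mem_univ k) (gME1 (by simp_all [eq_comm]))]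
          simp_all [eq_comm]
    · -- k ≠ l, m ≠ n
      rcases eq_or_ne k m with rfl | hkm
      · rcases eq_or_ne l n with rfl | hln
        · -- k=m, l=n : value 1
          rw [Finset.prod_eq_one (fun i _ => by
            rcases eq_or_ne k i with rfl | h2
            · exact gME2 (by simp_all [eq_comm])
            · rcases eq_or_ne l i with rfl | h3
              · exact gME2 (by simp_all [eq_comm])
              · exact gME0 (by simp_all [eq_comm]))]
          simp_all [eq_comm]
        · rw [Finset.prod_eq_zero (Finset.mem_univ n) (gME1 (by simp_all [eq_comm]))]
          simp_all [eq_comm]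
      · rcases eq_or_ne k n with rfl | hkn
        · rcases eq_or_ne l m with rfl | hlm
          · -- k=n, l=m : value 1
            rw [Finset.prod_eq_one (fun i _ => by
              rcases eq_or_ne k i with rfl | h2
              · exact gME2 (by simp_all [eq_comm])
              · rcases eq_or_ne l i with rfl | h3
                · exact gME2 (by simp_all [eq_comm])
                · exact gME0 (by simp_all [eq_comm]))]
            simp_all [eq_comm]
          · rw [Finset.prod_eq_zero (Finset.mem_univ m) (gME1 (by simp_all [eq_comm]))]
            simp_all [eq_comm]
        · rw [Finset.prod_eq_zero (Finset.mem_univ k) (gME1 (by simp_all [eq_comm]))]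
          simp_all [eq_comm]

noncomputable def stdGaussianE (d : ℕ) : Measure (EuclideanSpace ℝ (Fin d)) :=
  (stdGaussianPi d).map (MeasurableEquiv.toLp 2 (Fin d → ℝ))

/-- The square root of a positive semidefinite matrix, as `Matrix.PosSemidef.sqrt` was defined
in the older Mathlib (since removed in favour of `CFC.sqrt`). -/
noncomputable def Matrix.PosSemidef.sqrt {n 𝕜 : Type*} [Fintype n] [RCLike 𝕜] [PartialOrder 𝕜] [DecidableEq n]
    {A : Matrix n n 𝕜} (hA : A.PosSemidef) : Matrix n n 𝕜 :=
  hA.1.eigenvectorUnitary.1 * diagonal ((↑) ∘ Real.sqrt ∘ hA.1.eigenvalues) *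
    (star hA.1.eigenvectorUnitary : Matrix n n 𝕜)

lemma sqrt_facts (d : ℕ) (S : Matrix (Fin d) (Fin d) ℝ) (hS : S.PosDef) :
    hS.posSemidef.sqrt * hS.posSemidef.sqrt = S ∧ (hS.posSemidef.sqrt)ᵀ = hS.posSemidef.sqrt := by
  set U := hS.posSemidef.1.eigenvectorUnitary
  have hU : (star U : Matrix (Fin d) (Fin d) ℝ) * U.1 = 1 := Unitary.coe_star_mul_self U
  constructor
  · conv_rhs => rw [hS.posSemidef.1.spectral_theorem]
    rw [Unitary.conjStarAlgAut_apply]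
    simp only [Matrix.PosSemidef.sqrt]
    rw [show ∀ a b c e f g : Matrix (Fin d) (Fin d) ℝ, a * b * c * (e * f * g) = a * (b * (c * e) * f) * g
      from fun a b c e f g => by simp only [Matrix.mul_assoc]]
    rw [hU, Matrix.mul_one, diagonal_mul_diagonal]
    congr 3; ext k
    simp [Real.mul_self_sqrt (hS.posSemidef.eigenvalues_nonneg k)]
  · simp only [Matrix.PosSemidef.sqrt, transpose_mul, diagonal_transpose]
    rw [Matrix.mul_assoc]
    simp [Matrix.star_eq_conjTranspose]

noncomputable def mvE {d : ℕ} (A : Matrix (Fin d) (Fin d) ℝ) (x : EuclideanSpace ℝ (Fin d)) :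
    EuclideanSpace ℝ (Fin d) :=
  Matrix.toEuclideanLin A x

/-- (1/2)·E[(uᵀ Σ^{1/2} H Σ^{1/2} u)·(Σ^{-1/2} u uᵀ Σ^{-1/2} − Σ^{-1})] = H, entrywise. -/
theorem stmt2 (d : ℕ) (H S : Matrix (Fin d) (Fin d) ℝ)
    (hH : H.IsSymm) (hS : S.PosDef) :
    ∀ i j,
      (1/2) * ∫ u,
          (u ⬝ᵥ (hS.posSemidef.sqrt * H * hS.posSemidef.sqrt).mulVec u) *
            ((vecMulVec ((hS.posSemidef.sqrt)⁻¹.mulVec u) ((hS.posSemidef.sqrt)⁻¹.mulVec u)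
              - S⁻¹) i j) ∂(stdGaussianPi d)
        = H i j := by
  intro i j
  set R := hS.posSemidef.sqrt with hRdef
  set A := R * H * R with hAdef
  set B := R⁻¹ with hBdef
  have hRR : R * R = S := (sqrt_facts d S hS).1
  have hRsym : Rᵀ = R := by
    exact (sqrt_facts d S hS).2
  have hdet : R.det ≠ 0 := by
    intro h0
    have h1 : S.det = 0 := by rw [← hRR, Matrix.det_mul, h0, mul_zero]
    exact hS.det_pos.ne' h1
  have hu : IsUnit R.det := isUnit_iff_ne_zero.mpr hdet
  have hRB : R * B = 1 := Matrix.mul_nonsing_inv R hu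
  have hBR : B * R = 1 := Matrix.nonsing_inv_mul R hu
  have hBB : B * B = S⁻¹ := by rw [hBdef, ← Matrix.mul_inv_rev, hRR]
  have hBsym : ∀ a b, B a b = B b a := by
    have h1 : Bᵀ = B := by rw [hBdef, Matrix.transpose_nonsing_inv, hRsym]
    intro a b
    conv_lhs => rw [← h1]
    rw [Matrix.transpose_apply]
  have hAsym : ∀ a b, A a b = A b a := by
    have h1 : Aᵀ = A := by
      rw [hAdef, Matrix.transpose_mul, Matrix.transpose_mul, hRsym, hH.eq, Matrix.mul_assoc]
    intro a b
    conv_lhs => rw [← h1]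
    rw [Matrix.transpose_apply]
  have hBAB : B * A * B = H := by
    rw [hAdef, show B * (R * H * R) * B = B * R * H * (R * B) from by
      simp only [Matrix.mul_assoc], hBR, hRB, Matrix.one_mul, Matrix.mul_one]
  have hpt : ∀ u : Fin d → ℝ,
      (u ⬝ᵥ A.mulVec u) * ((vecMulVec (B.mulVec u) (B.mulVec u) - S⁻¹) i j)
      = (∑ p : (Fin d × Fin d) × Fin d × Fin d,
          (A p.1.1 p.1.2 * (B i p.2.1 * B j p.2.2)) * (u p.1.1 * u p.1.2 * (u p.2.1 * u p.2.2)))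
        - (∑ q : Fin d × Fin d, (A q.1 q.2 * S⁻¹ i j) * (u q.1 * u q.2)) := by
    intro u
    have E1 : ∀ {α β : Type} [Fintype α] [Fintype β] (f : α → ℝ) (g : β → ℝ),
        (∑ a, f a) * (∑ b, g b) = ∑ ab : α × β, f ab.1 * g ab.2 := by
      intro α β _ _ f g
      rw [Fintype.sum_prod_type, Finset.sum_mul_sum]
    have hP : u ⬝ᵥ A.mulVec u = ∑ kl : Fin d × Fin d, A kl.1 kl.2 * (u kl.1 * u kl.2) := by
      simp only [dotProduct, Matrix.mulVec, Fintype.sum_prod_type, Finset.mul_sum]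
      exact Finset.sum_congr rfl fun k _ => Finset.sum_congr rfl fun l _ => by ring
    have hE : (vecMulVec (B.mulVec u) (B.mulVec u) - S⁻¹) i j
        = (∑ m, B i m * u m) * (∑ n, B j n * u n) - S⁻¹ i j := by
      simp [Matrix.vecMulVec_apply, Matrix.sub_apply, Matrix.mulVec, dotProduct]
    rw [hP, hE, mul_sub, E1, E1, Finset.sum_mul]
    congr 1
    · exact Finset.sum_congr rfl fun p _ => by ring
    · exact Finset.sum_congr rfl fun q _ => by ring
  rw [integral_congr_ae (Filter.Eventually.of_forall hpt)]
  rw [integral_sub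
    (integrable_finset_sum _ fun p _ => (integrable_mono4 p.1.1 p.1.2 p.2.1 p.2.2).const_mul _)
    (integrable_finset_sum _ fun q _ => (integrable_mono2 q.1 q.2).const_mul _),
    integral_finset_sum _ (fun p _ => (integrable_mono4 p.1.1 p.1.2 p.2.1 p.2.2).const_mul _),
    integral_finset_sum _ (fun q _ => (integrable_mono2 q.1 q.2).const_mul _)]
  simp_rw [integral_const_mul, moment4, moment2]
  simp only [Fintype.sum_prod_type, mul_add, Finset.sum_add_distrib, mul_ite, ite_mul,
    mul_one, mul_zero, one_mul, zero_mul, Finset.sum_ite_irrel, Finset.sum_ite_eq,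
    Finset.sum_ite_eq', Finset.mem_univ, if_true, Finset.sum_const_zero, add_zero, zero_add]
  have h1 : ∀ k : Fin d, ∑ m : Fin d, A k k * (B i m * B j m) = A k k * S⁻¹ i j := by
    intro k
    rw [← Finset.mul_sum]
    congr 1
    rw [← hBB, Matrix.mul_apply]
    exact Finset.sum_congr rfl fun m _ => by rw [hBsym j m]
  have h2 : ∑ k : Fin d, ∑ l : Fin d, A k l * (B i k * B j l) = H i j := by
    rw [← hBAB]
    simp_rw [Matrix.mul_apply, Finset.sum_mul]
    rw [Finset.sum_comm]
    exact Finset.sum_congr rfl fun l _ => Finset.sum_congr rfl fun k _ => by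
      rw [hBsym j l]; ring
  have h3 : ∑ k : Fin d, ∑ l : Fin d, A k l * (B i l * B j k) = H i j := by
    rw [← h2, Finset.sum_comm]
    exact Finset.sum_congr rfl fun a _ => Finset.sum_congr rfl fun b _ => by
      rw [hAsym b a]
  simp_rw [h1]
  rw [h2, h3]
  ring
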